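/- Let A, B, C, D be pairwise distinct points of ℝ² lying on a circle with center O and radius r > 0, let u ∈ ℝ² be nonzero, and let ℓ = {M + t·u : t ∈ ℝ} be a line containing none of A, B, C, D. Suppose some conic G through A, B, C, D, given by a polynomial not proportional to (x − O₁)² + (y − O₂)² − r², meets ℓ in exactly two points P ≠ Q with dist(O, P) = dist(O, Q) and M = (P + Q)/2. Then there exist conics f₁ and f₂ through A, B, C, D and constants c₁ ≠ 0, c₂ ≠ 0 such that f₁(M + t·u) = c₁·t² for all t ∈ ℝ (a conic tangent to ℓ at M) and f₂(M + t·u) = c₂ for all t ∈ ℝ (a hyperbola having ℓ as an asymptote). -/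

import Mathlib

/-- A conic (possibly degenerate) in the affine plane `ℝ × ℝ`, given by the six
coefficients of a polynomial `a·x² + b·x·y + c·y² + d·x + e·y + g`. -/
structure Conic where
  a : ℝ
  b : ℝ
  c : ℝ
  d : ℝ
  e : ℝ
  g : ℝ

/-- Evaluation of the defining polynomial of a conic at a point of `ℝ × ℝ`. -/
def Conic.eval (f : Conic) (p : ℝ × ℝ) : ℝ :=
  f.a * p.1 ^ 2 + f.b * p.1 * p.2 + f.c * p.2 ^ 2 + f.d * p.1 + f.e * p.2 + f.g

/-- The defining polynomial is nonzero. -/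
def Conic.Nonzero (f : Conic) : Prop :=
  ¬ (f.a = 0 ∧ f.b = 0 ∧ f.c = 0 ∧ f.d = 0 ∧ f.e = 0 ∧ f.g = 0)

/-- The conic passes through the four points `A`, `B`, `C`, `D`. -/
def Conic.Through (f : Conic) (A B C D : ℝ × ℝ) : Prop :=
  f.eval A = 0 ∧ f.eval B = 0 ∧ f.eval C = 0 ∧ f.eval D = 0

/-- No three of the four points `A`, `B`, `C`, `D` are collinear. -/
def NoThreeCollinear (A B C D : ℝ × ℝ) : Prop :=
  ¬ Collinear ℝ ({A, B, C} : Set (ℝ × ℝ)) ∧ ¬ Collinear ℝ ({A, B, D} : Set (ℝ × ℝ)) ∧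
  ¬ Collinear ℝ ({A, C, D} : Set (ℝ × ℝ)) ∧ ¬ Collinear ℝ ({B, C, D} : Set (ℝ × ℝ))

/-- The line through `M` with direction `u`. -/
def parmLine (M u : ℝ × ℝ) : Set (ℝ × ℝ) :=
  {p | ∃ t : ℝ, p = M + t • u}

/-- The polynomial `(x − O₁)² + (y − O₂)² − r²` of the circle with center `O` and
radius `r`, as a conic. -/
def circleConic (O : ℝ × ℝ) (r : ℝ) : Conic :=
  ⟨1, 0, 1, -2 * O.1, -2 * O.2, O.1 ^ 2 + O.2 ^ 2 - r ^ 2⟩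

/-- The polynomial of `f` is proportional to that of `h`. -/
def Conic.PropTo (f h : Conic) : Prop :=
  ∃ k : ℝ, f.a = k * h.a ∧ f.b = k * h.b ∧ f.c = k * h.c ∧
    f.d = k * h.d ∧ f.e = k * h.e ∧ f.g = k * h.g

/-- `P` lies on the circle with center `O` and radius `r`. -/
def OnCircle (P O : ℝ × ℝ) (r : ℝ) : Prop :=
  (P.1 - O.1) ^ 2 + (P.2 - O.2) ^ 2 = r ^ 2

/-! Restricted to `ℓ`, the circle polynomial `S` is `n t² + s₀` (no linear term: `OP = OQ` makes
`OM ⟂ ℓ`) and `G` is `q (t² - t₀²)` (its roots `±t₀` are symmetric about `M`). Hence in the pencil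
`q t₀² S + s₀ G` restricts to `q (n t₀² + s₀) t²` and `q S - n G` to the constant `q (n t₀² + s₀)`.
Here `q ≠ 0` because `G` does not contain `ℓ`, and `n t₀² + s₀ = S(P) ≠ 0`: otherwise `q S - n G`
contains `ℓ`, so it is `ℓ` times a line through the concyclic points `A, B, C`, which forces it to
vanish and `G` to be proportional to `S`. -/

namespace Conic

instance : Add Conic :=
  ⟨fun f h => ⟨f.a + h.a, f.b + h.b, f.c + h.c, f.d + h.d, f.e + h.e, f.g + h.g⟩⟩

instance : SMul ℝ Conic :=
  ⟨fun k f => ⟨k * f.a, k * f.b, k * f.c, k * f.d, k * f.e, k * f.g⟩⟩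

@[simp]
theorem eval_add (f h : Conic) (X : ℝ × ℝ) : (f + h).eval X = f.eval X + h.eval X := by
  change (f.a + h.a) * X.1 ^ 2 + (f.b + h.b) * X.1 * X.2 + (f.c + h.c) * X.2 ^ 2
    + (f.d + h.d) * X.1 + (f.e + h.e) * X.2 + (f.g + h.g) = _
  simp only [eval]
  ring

@[simp]
theorem eval_smul (k : ℝ) (f : Conic) (X : ℝ × ℝ) : (k • f).eval X = k * f.eval X := by
  change k * f.a * X.1 ^ 2 + k * f.b * X.1 * X.2 + k * f.c * X.2 ^ 2
    + k * f.d * X.1 + k * f.e * X.2 + k * f.g = _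
  simp only [eval]
  ring

theorem Through.add {f h : Conic} {A B C D : ℝ × ℝ} (hf : f.Through A B C D)
    (hh : h.Through A B C D) : (f + h).Through A B C D := by
  simp_all [Through]

theorem Through.smul {f : Conic} {A B C D : ℝ × ℝ} (k : ℝ) (hf : f.Through A B C D) :
    (k • f).Through A B C D := by
  simp_all [Through]

theorem nonzero_of_eval_ne_zero {f : Conic} {X : ℝ × ℝ} (h : f.eval X ≠ 0) : f.Nonzero := by
  rintro ⟨ha, hb, hc, hd, he, hg⟩
  simp [eval, ha, hb, hc, hd, he, hg] at h

theorem propTo_of_eval_eq_mul {f h : Conic} {k : ℝ} (hfh : ∀ X, f.eval X = k * h.eval X) :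
    f.PropTo h := by
  have h₀ := hfh (0, 0)
  have h₁ := hfh (1, 0)
  have h₂ := hfh (-1, 0)
  have h₃ := hfh (0, 1)
  have h₄ := hfh (0, -1)
  have h₅ := hfh (1, 1)
  simp only [eval] at h₀ h₁ h₂ h₃ h₄ h₅
  refine ⟨k, ?_, ?_, ?_, ?_, ?_, ?_⟩
  · linear_combination (h₁ + h₂) / 2 - h₀
  · linear_combination h₅ - h₁ - h₃ + h₀
  · linear_combination (h₃ + h₄) / 2 - h₀
  · linear_combination (h₁ - h₂) / 2
  · linear_combination (h₃ - h₄) / 2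
  · linear_combination h₀

def quadForm (f : Conic) (v : ℝ × ℝ) : ℝ :=
  f.a * v.1 ^ 2 + f.b * v.1 * v.2 + f.c * v.2 ^ 2

def lineDeriv (f : Conic) (M v : ℝ × ℝ) : ℝ :=
  (2 * f.a * M.1 + f.b * M.2 + f.d) * v.1 + (f.b * M.1 + 2 * f.c * M.2 + f.e) * v.2

theorem eval_add_smul (f : Conic) (M u : ℝ × ℝ) (t : ℝ) :
    f.eval (M + t • u) = f.quadForm u * t ^ 2 + f.lineDeriv M u * t + f.eval M := by
  simp only [eval, quadForm, lineDeriv, Prod.fst_add, Prod.snd_add, Prod.smul_fst,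
    Prod.smul_snd, smul_eq_mul]
  ring

theorem lineDeriv_eq_zero_of_eval_symm {f : Conic} {M u : ℝ × ℝ} {t : ℝ}
    (h : f.eval (M + t • u) = f.eval (M + (-t) • u)) (ht : t ≠ 0) : f.lineDeriv M u = 0 := by
  rw [eval_add_smul, eval_add_smul] at h
  have : (2 * t) * f.lineDeriv M u = 0 := by linear_combination h
  exact (mul_eq_zero.mp this).resolve_left (by positivity)

theorem eval_add_smul_of_eval_symm {f : Conic} {M u : ℝ × ℝ} {t : ℝ}
    (h : f.eval (M + t • u) = f.eval (M + (-t) • u)) (ht : t ≠ 0) (s : ℝ) :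
    f.eval (M + s • u) = f.quadForm u * s ^ 2 + f.eval M := by
  rw [eval_add_smul, lineDeriv_eq_zero_of_eval_symm h ht, zero_mul, add_zero]

theorem quadForm_eq_zero_of_vanishes_on_line {f : Conic} {M u : ℝ × ℝ}
    (hf : ∀ t : ℝ, f.eval (M + t • u) = 0) :
    f.quadForm u = 0 ∧ f.lineDeriv M u = 0 ∧ f.eval M = 0 := by
  have h₀ := hf 0
  have h₁ := hf 1
  have h₂ := hf (-1)
  rw [eval_add_smul] at h₀ h₁ h₂
  refine ⟨?_, ?_, ?_⟩
  · linear_combination (h₁ + h₂) / 2 - h₀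
  · linear_combination (h₁ - h₂) / 2
  · linear_combination h₀

end Conic

@[simp]
theorem circleConic_eval (O : ℝ × ℝ) (r : ℝ) (X : ℝ × ℝ) :
    (circleConic O r).eval X = (X.1 - O.1) ^ 2 + (X.2 - O.2) ^ 2 - r ^ 2 := by
  simp only [circleConic, Conic.eval]
  ring

theorem circleConic_quadForm (O : ℝ × ℝ) (r : ℝ) (u : ℝ × ℝ) :
    (circleConic O r).quadForm u = u.1 ^ 2 + u.2 ^ 2 := by
  simp [circleConic, Conic.quadForm]

theorem circleConic_eval_eq_zero {O X : ℝ × ℝ} {r : ℝ} (hX : OnCircle X O r) :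
    (circleConic O r).eval X = 0 := by
  rw [circleConic_eval, hX, sub_self]

theorem circleConic_through {O A B C D : ℝ × ℝ} {r : ℝ} (hA : OnCircle A O r)
    (hB : OnCircle B O r) (hC : OnCircle C O r) (hD : OnCircle D O r) :
    (circleConic O r).Through A B C D :=
  ⟨circleConic_eval_eq_zero hA, circleConic_eval_eq_zero hB, circleConic_eval_eq_zero hC,
    circleConic_eval_eq_zero hD⟩

theorem sq_add_sq_ne_zero_of_ne_zero {u : ℝ × ℝ} (hu : u ≠ 0) : u.1 ^ 2 + u.2 ^ 2 ≠ 0 := by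
  contrapose! hu
  ext <;> simp <;> nlinarith [sq_nonneg u.1, sq_nonneg u.2]

theorem mem_parmLine_of_cross_eq_zero {M u X : ℝ × ℝ} (hu : u ≠ 0)
    (h : (X.2 - M.2) * u.1 - (X.1 - M.1) * u.2 = 0) : X ∈ parmLine M u := by
  have hnu := sq_add_sq_ne_zero_of_ne_zero hu
  refine ⟨((X.1 - M.1) * u.1 + (X.2 - M.2) * u.2) / (u.1 ^ 2 + u.2 ^ 2), Prod.ext ?_ ?_⟩
  · simp only [Prod.fst_add, Prod.smul_fst, smul_eq_mul]
    field_simp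
    linear_combination -u.2 * h
  · simp only [Prod.snd_add, Prod.smul_snd, smul_eq_mul]
    field_simp
    linear_combination u.1 * h

/-- Write `X - M = α u + β w` with `w = (-u₂, u₁)`; on the line `β = 0`, and the vanishing of
`f` there kills every term of `f (M + α u + β w)` that is not divisible by `β`. -/
theorem Conic.exists_factor_of_vanishes_on_line {f : Conic} {M u : ℝ × ℝ}
    (hf : ∀ t : ℝ, f.eval (M + t • u) = 0) :
    ∃ p q k : ℝ, ∀ X : ℝ × ℝ, (u.1 ^ 2 + u.2 ^ 2) ^ 2 * f.eval X =
      ((X.2 - M.2) * u.1 - (X.1 - M.1) * u.2) * (p * X.1 + q * X.2 + k) := by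
  obtain ⟨hQ, hD, hM⟩ := Conic.quadForm_eq_zero_of_vanishes_on_line hf
  set w : ℝ × ℝ := (-u.2, u.1)
  set B := -2 * f.a * u.1 * u.2 + f.b * (u.1 ^ 2 - u.2 ^ 2) + 2 * f.c * u.1 * u.2
  set p := u.1 * B - u.2 * f.quadForm w
  set q := u.2 * B + u.1 * f.quadForm w
  refine ⟨p, q, (u.1 ^ 2 + u.2 ^ 2) * f.lineDeriv M w - M.1 * p - M.2 * q, fun X => ?_⟩
  simp only [Conic.eval, Conic.quadForm, Conic.lineDeriv, w, p, q, B] at hQ hD hM ⊢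
  linear_combination (u.1 ^ 2 + u.2 ^ 2) ^ 2 * hM
    + (u.1 ^ 2 + u.2 ^ 2) * ((X.1 - M.1) * u.1 + (X.2 - M.2) * u.2) * hD
    + ((X.1 - M.1) * u.1 + (X.2 - M.2) * u.2) ^ 2 * hQ

/-- The chord `XY` of the circle is perpendicular both to the normal `(p, q)` of a line through
`X` and `Y` and to `X + Y - 2 O`, so these two vectors are parallel. -/
theorem normal_parallel_of_chord {O X Y : ℝ × ℝ} {r p q k : ℝ} (hX : OnCircle X O r)
    (hY : OnCircle Y O r) (hXY : X ≠ Y) (lX : p * X.1 + q * X.2 + k = 0)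
    (lY : p * Y.1 + q * Y.2 + k = 0) :
    q * (X.1 + Y.1 - 2 * O.1) - p * (X.2 + Y.2 - 2 * O.2) = 0 := by
  unfold OnCircle at hX hY
  have h : (q * (X.1 + Y.1 - 2 * O.1) - p * (X.2 + Y.2 - 2 * O.2)) • (X - Y) = 0 := by
    ext
    · simp only [Prod.smul_fst, Prod.fst_sub, Prod.fst_zero, smul_eq_mul]
      linear_combination q * (hX - hY) - (X.2 + Y.2 - 2 * O.2) * (lX - lY)
    · simp only [Prod.smul_snd, Prod.snd_sub, Prod.snd_zero, smul_eq_mul]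
      linear_combination (X.1 + Y.1 - 2 * O.1) * (lX - lY) - p * (hX - hY)
  exact (smul_eq_zero.mp h).resolve_right (sub_ne_zero.mpr hXY)

theorem affine_eq_zero_of_concyclic {O A B C : ℝ × ℝ} {r p q k : ℝ} (hA : OnCircle A O r)
    (hB : OnCircle B O r) (hC : OnCircle C O r) (hAB : A ≠ B) (hAC : A ≠ C) (hBC : B ≠ C)
    (lA : p * A.1 + q * A.2 + k = 0) (lB : p * B.1 + q * B.2 + k = 0)
    (lC : p * C.1 + q * C.2 + k = 0) : p = 0 ∧ q = 0 ∧ k = 0 := by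
  have hAB' := normal_parallel_of_chord hA hB hAB lA lB
  have hAC' := normal_parallel_of_chord hA hC hAC lA lC
  have h : (p ^ 2 + q ^ 2) • (B - C) = 0 := by
    ext
    · simp only [Prod.smul_fst, Prod.fst_sub, Prod.fst_zero, smul_eq_mul]
      linear_combination p * (lB - lC) + q * (hAB' - hAC')
    · simp only [Prod.smul_snd, Prod.snd_sub, Prod.snd_zero, smul_eq_mul]
      linear_combination q * (lB - lC) - p * (hAB' - hAC')
  have hpq := (smul_eq_zero.mp h).resolve_right (sub_ne_zero.mpr hBC)
  have hp : p = 0 := by nlinarith [sq_nonneg p, sq_nonneg q]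
  have hq : q = 0 := by nlinarith [sq_nonneg p, sq_nonneg q]
  subst hp hq
  exact ⟨rfl, rfl, by linarith⟩

/-- A conic containing a line factors as that line times a second line, which here has to pass
through three points of a circle and therefore vanishes. -/
theorem Conic.eval_eq_zero_of_vanishes_on_line {f : Conic} {O A B C M u : ℝ × ℝ} {r : ℝ}
    (hu : u ≠ 0) (hf : ∀ t : ℝ, f.eval (M + t • u) = 0) (hA : OnCircle A O r)
    (hB : OnCircle B O r) (hC : OnCircle C O r) (hAB : A ≠ B) (hAC : A ≠ C) (hBC : B ≠ C)
    (hAl : A ∉ parmLine M u) (hBl : B ∉ parmLine M u) (hCl : C ∉ parmLine M u)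
    (hfA : f.eval A = 0) (hfB : f.eval B = 0) (hfC : f.eval C = 0) (X : ℝ × ℝ) :
    f.eval X = 0 := by
  obtain ⟨p, q, k, hfactor⟩ := f.exists_factor_of_vanishes_on_line hf
  have hroot : ∀ Y, Y ∉ parmLine M u → f.eval Y = 0 → p * Y.1 + q * Y.2 + k = 0 := by
    intro Y hY hfY
    have h := hfactor Y
    rw [hfY, mul_zero, eq_comm, mul_eq_zero] at h
    exact h.resolve_left fun h' => hY (mem_parmLine_of_cross_eq_zero hu h')
  obtain ⟨rfl, rfl, rfl⟩ := affine_eq_zero_of_concyclic hA hB hC hAB hAC hBC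
    (hroot A hAl hfA) (hroot B hBl hfB) (hroot C hCl hfC)
  have h := hfactor X
  rw [zero_mul, zero_mul, add_zero, add_zero, mul_zero, mul_eq_zero] at h
  exact h.resolve_left (pow_ne_zero 2 (sq_add_sq_ne_zero_of_ne_zero hu))

theorem eq_add_neg_smul_of_midpoint {M P Q u : ℝ × ℝ} {t : ℝ} (hP : P = M + t • u)
    (hM : M = midpoint ℝ P Q) : Q = M + (-t) • u := by
  rw [← midpoint_eq_iff.mp hM.symm, AffineEquiv.pointReflection_apply, hP]
  simp only [vsub_eq_sub, vadd_eq_add, neg_smul]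
  abel

theorem Conic.exists_eval_line_of_inter_eq_pair {f : Conic} {M u P Q : ℝ × ℝ} (hu : u ≠ 0)
    (hPQ : P ≠ Q) (hf : {p ∈ parmLine M u | f.eval p = 0} = {P, Q})
    (hM : M = midpoint ℝ P Q) :
    ∃ t : ℝ, P = M + t • u ∧ Q = M + (-t) • u ∧ t ≠ 0 ∧ f.quadForm u ≠ 0 ∧
      ∀ s : ℝ, f.eval (M + s • u) = f.quadForm u * (s ^ 2 - t ^ 2) := by
  obtain ⟨⟨t, rfl⟩, hfP⟩ : P ∈ {p ∈ parmLine M u | f.eval p = 0} := hf ▸ Set.mem_insert P {Q}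
  obtain rfl := eq_add_neg_smul_of_midpoint rfl hM
  obtain ⟨-, hfQ⟩ : M + (-t) • u ∈ {p ∈ parmLine M u | f.eval p = 0} :=
    hf ▸ Set.mem_insert_of_mem _ rfl
  have ht : t ≠ 0 := by rintro rfl; simp at hPQ
  have hline := f.eval_add_smul_of_eval_symm (hfP.trans hfQ.symm) ht
  have hfM : f.eval M = -(f.quadForm u * t ^ 2) := by linear_combination hfP - hline t
  have hq : f.quadForm u ≠ 0 := by
    intro hq
    have hMmem : M ∈ {p ∈ parmLine M u | f.eval p = 0} := ⟨⟨0, by simp⟩, by simp [hfM, hq]⟩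
    rw [hf] at hMmem
    rcases hMmem with h | h <;> simp [hu, ht] at h
  refine ⟨t, rfl, rfl, ht, hq, fun s => ?_⟩
  rw [hline, hfM]
  ring

theorem propTo_circleConic_of_pencil_vanishes_on_line {G : Conic} {O A B C M u : ℝ × ℝ}
    {r k l : ℝ} (hu : u ≠ 0) (hl : l ≠ 0)
    (hline : ∀ s : ℝ, (k • circleConic O r + l • G).eval (M + s • u) = 0)
    (hA : OnCircle A O r) (hB : OnCircle B O r) (hC : OnCircle C O r)
    (hAB : A ≠ B) (hAC : A ≠ C) (hBC : B ≠ C)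
    (hAl : A ∉ parmLine M u) (hBl : B ∉ parmLine M u) (hCl : C ∉ parmLine M u)
    (hGA : G.eval A = 0) (hGB : G.eval B = 0) (hGC : G.eval C = 0) :
    G.PropTo (circleConic O r) := by
  refine Conic.propTo_of_eval_eq_mul (k := -k / l) fun X => ?_
  have h := Conic.eval_eq_zero_of_vanishes_on_line hu hline hA hB hC hAB hAC hBC hAl hBl hCl
    (by simp [circleConic_eval_eq_zero hA, hGA]) (by simp [circleConic_eval_eq_zero hB, hGB])
    (by simp [circleConic_eval_eq_zero hC, hGC]) X
  rw [Conic.eval_add, Conic.eval_smul, Conic.eval_smul] at h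
  field_simp
  linear_combination h

/-- The coefficients are chosen to cancel the constant term, resp. the `t²` term, of the
restriction to the line. -/
theorem exists_tangent_and_asymptote_in_pencil {S G : Conic} {A B C D M u : ℝ × ℝ}
    {n s₀ q t : ℝ} (hS : S.Through A B C D) (hG : G.Through A B C D)
    (hSline : ∀ s : ℝ, S.eval (M + s • u) = n * s ^ 2 + s₀)
    (hGline : ∀ s : ℝ, G.eval (M + s • u) = q * (s ^ 2 - t ^ 2))
    (hc : q * (n * t ^ 2 + s₀) ≠ 0) :
    (∃ f₁ : Conic, f₁.Nonzero ∧ f₁.Through A B C D ∧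
      ∃ c₁ : ℝ, c₁ ≠ 0 ∧ ∀ t : ℝ, f₁.eval (M + t • u) = c₁ * t ^ 2) ∧
    (∃ f₂ : Conic, f₂.Nonzero ∧ f₂.Through A B C D ∧
      ∃ c₂ : ℝ, c₂ ≠ 0 ∧ ∀ t : ℝ, f₂.eval (M + t • u) = c₂) := by
  have htangent (s : ℝ) : ((q * t ^ 2) • S + s₀ • G).eval (M + s • u) =
      q * (n * t ^ 2 + s₀) * s ^ 2 := by
    simp only [Conic.eval_add, Conic.eval_smul, hSline, hGline]
    ring
  have hasymptote (s : ℝ) : (q • S + (-n) • G).eval (M + s • u) = q * (n * t ^ 2 + s₀) := by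
    simp only [Conic.eval_add, Conic.eval_smul, hSline, hGline]
    ring
  refine ⟨⟨_, ?_, (hS.smul _).add (hG.smul _), _, hc, htangent⟩,
    ⟨_, Conic.nonzero_of_eval_ne_zero (hasymptote 0 ▸ hc), (hS.smul _).add (hG.smul _), _, hc,
      hasymptote⟩⟩
  exact Conic.nonzero_of_eval_ne_zero (X := M + (1 : ℝ) • u)
    (by rw [htangent, one_pow, mul_one]; exact hc)

theorem tangent_and_asymptote_conics_exist_general
    (O : ℝ × ℝ) (r : ℝ)
    (A B C D : ℝ × ℝ)
    (hAB : A ≠ B) (hAC : A ≠ C)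
    (hBC : B ≠ C)
    (hA : OnCircle A O r) (hB : OnCircle B O r)
    (hC : OnCircle C O r) (hD : OnCircle D O r)
    (M u : ℝ × ℝ) (hu : u ≠ 0)
    (hAl : A ∉ parmLine M u) (hBl : B ∉ parmLine M u)
    (hCl : C ∉ parmLine M u)
    (G : Conic) (hG : G.Through A B C D)
    (hGcirc : ¬ G.PropTo (circleConic O r))
    (P Q : ℝ × ℝ) (hPQ : P ≠ Q)
    (hGl : {p ∈ parmLine M u | G.eval p = 0} = {P, Q})
    (hdist : (P.1 - O.1) ^ 2 + (P.2 - O.2) ^ 2 = (Q.1 - O.1) ^ 2 + (Q.2 - O.2) ^ 2)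
    (hM : M = midpoint ℝ P Q) :
    (∃ f₁ : Conic, f₁.Nonzero ∧ f₁.Through A B C D ∧
      ∃ c₁ : ℝ, c₁ ≠ 0 ∧ ∀ t : ℝ, f₁.eval (M + t • u) = c₁ * t ^ 2) ∧
    (∃ f₂ : Conic, f₂.Nonzero ∧ f₂.Through A B C D ∧
      ∃ c₂ : ℝ, c₂ ≠ 0 ∧ ∀ t : ℝ, f₂.eval (M + t • u) = c₂) := by
  obtain ⟨t, rfl, rfl, ht, hq, hGline⟩ := G.exists_eval_line_of_inter_eq_pair hu hPQ hGl hM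
  have hSline := (circleConic O r).eval_add_smul_of_eval_symm (M := M) (u := u)
    (by simp only [circleConic_eval, hdist]) ht
  have hn : (circleConic O r).quadForm u ≠ 0 := by
    rw [circleConic_quadForm]
    exact sq_add_sq_ne_zero_of_ne_zero hu
  -- if `P` were on the circle, `q S - n G` would vanish on `ℓ`
  have hPoff : (circleConic O r).quadForm u * t ^ 2 + (circleConic O r).eval M ≠ 0 := by
    refine fun hP => hGcirc (propTo_circleConic_of_pencil_vanishes_on_line (k := G.quadForm u) hu
      (neg_ne_zero.mpr hn) (fun s => ?_) hA hB hC hAB hAC hBC hAl hBl hCl hG.1 hG.2.1 hG.2.2.1)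
    simp only [Conic.eval_add, Conic.eval_smul, hSline, hGline]
    linear_combination G.quadForm u * hP
  exact exists_tangent_and_asymptote_in_pencil (circleConic_through hA hB hC hD) hG hSline hGline
    (mul_ne_zero hq hPoff)

/-- In the concyclic butterfly configuration (four base points on a circle with
center `O`, a conic of the family cutting the line `ℓ = {M + t·u}` in two points
equidistant from `O` with midpoint `M`), the family of conics through the four
base points contains a conic tangent to `ℓ` at `M` (restriction `c₁·t²`) and a
hyperbola with `ℓ` as an asymptote (restriction a nonzero constant `c₂`). -/
theorem tangent_and_asymptote_conics_exist
    (O : ℝ × ℝ) (r : ℝ) (hr : 0 < r)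
    (A B C D : ℝ × ℝ)
    (hAB : A ≠ B) (hAC : A ≠ C) (hAD : A ≠ D)
    (hBC : B ≠ C) (hBD : B ≠ D) (hCD : C ≠ D)
    (hA : OnCircle A O r) (hB : OnCircle B O r)
    (hC : OnCircle C O r) (hD : OnCircle D O r)
    (M u : ℝ × ℝ) (hu : u ≠ 0)
    (hAl : A ∉ parmLine M u) (hBl : B ∉ parmLine M u)
    (hCl : C ∉ parmLine M u) (hDl : D ∉ parmLine M u)
    (G : Conic) (hG0 : G.Nonzero) (hG : G.Through A B C D)
    (hGcirc : ¬ G.PropTo (circleConic O r))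
    (P Q : ℝ × ℝ) (hPQ : P ≠ Q)
    (hGl : {p ∈ parmLine M u | G.eval p = 0} = {P, Q})
    (hdist : (P.1 - O.1) ^ 2 + (P.2 - O.2) ^ 2 = (Q.1 - O.1) ^ 2 + (Q.2 - O.2) ^ 2)
    (hM : M = midpoint ℝ P Q) :
    (∃ f₁ : Conic, f₁.Nonzero ∧ f₁.Through A B C D ∧
      ∃ c₁ : ℝ, c₁ ≠ 0 ∧ ∀ t : ℝ, f₁.eval (M + t • u) = c₁ * t ^ 2) ∧
    (∃ f₂ : Conic, f₂.Nonzero ∧ f₂.Through A B C D ∧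
      ∃ c₂ : ℝ, c₂ ≠ 0 ∧ ∀ t : ℝ, f₂.eval (M + t • u) = c₂) :=
  tangent_and_asymptote_conics_exist_general O r A B C D hAB hAC hBC hA hB hC hD M u hu hAl hBl hCl
    G hG hGcirc P Q hPQ hGl hdist hM
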